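/- Let 0 < r ≤ 1, 1 ≤ p ≤ 2, 1/r = 1/2 + 1/p, and let p' be the conjugate exponent of p. Every complex Banach space X has the approximation property AP_{[r,p']} in the following sense: whenever (λ_k) is a scalar sequence with Σ_k |λ_k|^r < ∞, (x'_k) is a bounded sequence in X*, (x_k) is a weakly p'-summable sequence in X, and Σ_k λ_k x'_k(x) x_k = 0 for every x ∈ X, then Σ_k λ_k ⟨U x_k, x'_k⟩ = 0 for every bounded linear operator U : X → X**. -/

import Mathlib

open Filter
open scoped ENNReal Topology

/-- `(x_k)` is weakly `q`-summable (`q = ⊤` meaning bounded; `q < ∞` meaning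
`sup_{‖f‖≤1} ∑_k |f(x_k)|^q < ∞`). -/
def WeaklyQSummable (q : ℝ≥0∞) {X : Type*} [NormedAddCommGroup X]
    [NormedSpace ℂ X] (x : ℕ → X) : Prop :=
  (q = ⊤ → ∃ M, ∀ k, ‖x k‖ ≤ M) ∧
  (q ≠ ⊤ → ∃ C, ∀ f : X →L[ℂ] ℂ, ‖f‖ ≤ 1 →
    ∀ F : Finset ℕ, ∑ k ∈ F, ‖f (x k)‖ ^ q.toReal ≤ C)

/-!
Write `λ_k = a_k δ_k` with `δ_k = |λ_k|^(1-r)`. Then `(a_k)` is summable, and Young's inequality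
`δ_k² |f(x_k)|² ≤ |λ_k|^r + |f(x_k)|^p'` (this is where `1/r = 1/2 + 1/p` enters) makes
`(δ_k x_k)` weakly 2-summable. So it suffices to treat `∑ a_k φ_k ⊗ y_k` with `a ∈ ℓ¹`, `(φ_k)`
bounded and `(y_k)` weakly 2-summable.

Split `a_k = α_k γ_k` with `α, γ ∈ ℓ²`. The synthesis map `B : ℓ² → X`, `e_k ↦ y_k`, is bounded,
and `W = F D` with `D = diag(γ)` and `F η = (α_k ⟨U B η, φ_k⟩)_k` is a product of two
Hilbert–Schmidt operators on `ℓ²` whose trace is `∑ a_k ⟨U y_k, φ_k⟩`. The hypothesis, carried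
from `X` to `X**` by duality, says `B D F = 0`, so `W² = 0`. A square-zero product of two
Hilbert–Schmidt operators has trace zero: with `P` the orthogonal projection onto `ker W` we have
`W = P F D`, and `tr (P F D) = tr (D P F) = tr (F D P) = tr (W P) = 0`.
-/

open scoped lp

noncomputable section

namespace ell2

variable {𝕜 : Type*} [RCLike 𝕜] {ι : Type*} {E : Type*} [NormedAddCommGroup E] [NormedSpace 𝕜 E]

theorem hasSum_norm_sq (v : ℓ²(ι, 𝕜)) : HasSum (fun i => ‖v i‖ ^ 2) (‖v‖ ^ 2) := by
  simpa [Real.rpow_two] using lp.hasSum_norm (by norm_num : 0 < (2 : ℝ≥0∞).toReal) v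

theorem sum_norm_sq_le (v : ℓ²(ι, 𝕜)) (F : Finset ι) : ∑ i ∈ F, ‖v i‖ ^ 2 ≤ ‖v‖ ^ 2 :=
  sum_le_hasSum F (fun _ _ => by positivity) (hasSum_norm_sq v)

section OfSummableNormSq

variable {φ : ι → E →L[𝕜] 𝕜}

theorem norm_apply_sq_le (φ : E →L[𝕜] 𝕜) (y : E) : ‖φ y‖ ^ 2 ≤ ‖φ‖ ^ 2 * ‖y‖ ^ 2 := by
  rw [← mul_pow]
  gcongr
  exact φ.le_opNorm y

theorem memℓp_two_of_summable_norm_sq (hφ : Summable fun k => ‖φ k‖ ^ 2) (y : E) :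
    Memℓp (fun k => φ k y) 2 := by
  refine memℓp_gen ?_
  simp only [ENNReal.toReal_ofNat, Real.rpow_two]
  exact (hφ.mul_right (‖y‖ ^ 2)).of_nonneg_of_le (fun _ => by positivity) fun k =>
    norm_apply_sq_le (φ k) y

def ofSummableNormSq (φ : ι → E →L[𝕜] 𝕜) (hφ : Summable fun k => ‖φ k‖ ^ 2) :
    E →L[𝕜] ℓ²(ι, 𝕜) :=
  LinearMap.mkContinuous
    { toFun := fun y => ⟨fun k => φ k y, memℓp_two_of_summable_norm_sq hφ y⟩
      map_add' := fun y z => by ext k; exact map_add (φ k) y z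
      map_smul' := fun c y => by ext k; exact map_smul (φ k) c y }
    √(∑' k, ‖φ k‖ ^ 2) fun y => by
      refine lp.norm_le_of_forall_sum_le (by norm_num) (by positivity) fun F => ?_
      simp only [ENNReal.toReal_ofNat, Real.rpow_two, LinearMap.coe_mk, AddHom.coe_mk]
      calc ∑ k ∈ F, ‖φ k y‖ ^ 2 ≤ ∑ k ∈ F, ‖φ k‖ ^ 2 * ‖y‖ ^ 2 :=
            Finset.sum_le_sum fun k _ => norm_apply_sq_le (φ k) y
        _ ≤ (∑' k, ‖φ k‖ ^ 2) * ‖y‖ ^ 2 := by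
            rw [← Finset.sum_mul]
            gcongr
            exact hφ.sum_le_tsum F fun _ _ => by positivity
        _ = (√(∑' k, ‖φ k‖ ^ 2) * ‖y‖) ^ 2 := by
            rw [mul_pow, Real.sq_sqrt (tsum_nonneg fun _ => by positivity)]

@[simp] theorem ofSummableNormSq_apply (hφ : Summable fun k => ‖φ k‖ ^ 2) (y : E) (k : ι) :
    ofSummableNormSq φ hφ y k = φ k y := rfl

theorem summable_norm_sq_comp {ψ : ι → E →L[𝕜] 𝕜} (hψ : Summable fun k => ‖ψ k‖ ^ 2)
    (G : ℓ²(ι, 𝕜) →L[𝕜] E) : Summable fun k => ‖(ψ k).comp G‖ ^ 2 := by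
  refine (hψ.mul_right (‖G‖ ^ 2)).of_nonneg_of_le (fun _ => sq_nonneg _) fun k => ?_
  rw [← mul_pow]
  gcongr
  exact (ψ k).opNorm_comp_le G

theorem summable_norm_sq_smul_evalCLM {γ : ι → 𝕜} (hγ : Summable fun k => ‖γ k‖ ^ 2) :
    Summable fun k => ‖γ k • lp.evalCLM 𝕜 (fun _ => 𝕜) 2 k‖ ^ 2 := by
  refine hγ.of_nonneg_of_le (fun _ => sq_nonneg _) fun k => ?_
  refine pow_le_pow_left₀ (norm_nonneg _) ?_ 2
  refine ContinuousLinearMap.opNorm_le_bound _ (norm_nonneg _) fun ξ => ?_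
  simpa [lp.evalCLM] using
    mul_le_mul_of_nonneg_left (lp.norm_apply_le_norm two_ne_zero ξ k) (norm_nonneg (γ k))

theorem summable_norm_sq_apply_smul {α : ι → 𝕜} {v : ι → E} {M : ℝ}
    (hα : Summable fun k => ‖α k‖ ^ 2) (hv : ∀ k, ‖v k‖ ≤ M) :
    Summable fun k => ‖ContinuousLinearMap.apply 𝕜 𝕜 (α k • v k)‖ ^ 2 := by
  refine (hα.mul_right (M ^ 2)).of_nonneg_of_le (fun _ => sq_nonneg _) fun k => ?_
  have hM : 0 ≤ M := (norm_nonneg _).trans (hv k)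
  refine (pow_le_pow_left₀ (norm_nonneg (ContinuousLinearMap.apply 𝕜 𝕜 (α k • v k))) ?_ 2).trans_eq
    (mul_pow _ _ 2)
  refine ContinuousLinearMap.opNorm_le_bound _ (by positivity) fun z => ?_
  rw [ContinuousLinearMap.apply_apply, mul_comm]
  refine (z.le_opNorm _).trans ?_
  gcongr
  exact (norm_smul_le (α k) (v k)).trans (by gcongr; exact hv k)

def diagonal (γ : ι → 𝕜) (hγ : Summable fun k => ‖γ k‖ ^ 2) : ℓ²(ι, 𝕜) →L[𝕜] ℓ²(ι, 𝕜) :=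
  ofSummableNormSq _ (summable_norm_sq_smul_evalCLM hγ)

@[simp] theorem diagonal_apply {γ : ι → 𝕜} (hγ : Summable fun k => ‖γ k‖ ^ 2) (ξ : ℓ²(ι, 𝕜))
    (k : ι) : diagonal γ hγ ξ k = γ k * ξ k := by
  simp [diagonal, lp.evalCLM]

end OfSummableNormSq

def row (A : ℓ²(ι, 𝕜) →L[𝕜] ℓ²(ι, 𝕜)) (j : ι) : ℓ²(ι, 𝕜) →L[𝕜] 𝕜 :=
  (lp.evalCLM 𝕜 (fun _ => 𝕜) 2 j).comp A

variable [DecidableEq ι]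

def basis (i : ι) : ℓ²(ι, 𝕜) := lp.single 2 i 1

theorem basis_apply (i j : ι) : (basis i : ι → 𝕜) j = if j = i then 1 else 0 := by
  simp [basis, lp.single_apply, Pi.single_apply]

theorem norm_basis (i : ι) : ‖(basis i : ℓ²(ι, 𝕜))‖ = 1 := by
  simp [basis, lp.norm_single]

theorem diagonal_basis {γ : ι → 𝕜} (hγ : Summable fun k => ‖γ k‖ ^ 2) (k : ι) :
    diagonal γ hγ (basis k) = γ k • basis k := by
  ext j
  by_cases h : j = k <;> simp [basis_apply, h]

theorem hasSum_apply_smul_basis (w : ℓ²(ι, 𝕜)) : HasSum (fun j => w j • basis j) w := by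
  convert lp.hasSum_single (by norm_num : (2 : ℝ≥0∞) ≠ ⊤) w using 2 with j
  rw [basis, ← lp.single_smul, smul_eq_mul, mul_one]

theorem hasSum_mul_apply_basis (A : ℓ²(ι, 𝕜) →L[𝕜] ℓ²(ι, 𝕜)) (w : ℓ²(ι, 𝕜)) (k : ι) :
    HasSum (fun j => w j * A (basis j) k) (A w k) := by
  simpa [lp.evalCLM] using
    ((hasSum_apply_smul_basis w).mapL A).mapL (lp.evalCLM 𝕜 (fun _ => 𝕜) 2 k)

theorem hasSum_norm_sq_apply_basis (ρ : ℓ²(ι, 𝕜) →L[𝕜] 𝕜) :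
    HasSum (fun i => ‖ρ (basis i)‖ ^ 2) (‖ρ‖ ^ 2) := by
  set v := (InnerProductSpace.toDual 𝕜 ℓ²(ι, 𝕜)).symm ρ
  have hρ : ∀ w, ρ w = inner 𝕜 v w := fun w => InnerProductSpace.toDual_symm_apply.symm
  rw [← LinearIsometryEquiv.norm_map (InnerProductSpace.toDual 𝕜 ℓ²(ι, 𝕜)).symm ρ]
  convert hasSum_norm_sq v using 2 with i
  rw [hρ, basis, lp.inner_single_right, RCLike.inner_apply, one_mul, RCLike.norm_conj]

def IsHilbertSchmidt (A : ℓ²(ι, 𝕜) →L[𝕜] ℓ²(ι, 𝕜)) : Prop :=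
  Summable fun i => ‖A (basis i)‖ ^ 2

theorem isHilbertSchmidt_iff_summable_entries {A : ℓ²(ι, 𝕜) →L[𝕜] ℓ²(ι, 𝕜)} :
    IsHilbertSchmidt A ↔ Summable fun ij : ι × ι => ‖A (basis ij.1) ij.2‖ ^ 2 := by
  rw [summable_prod_of_nonneg (fun _ => sq_nonneg _), IsHilbertSchmidt]
  simp only [fun i => (hasSum_norm_sq (A (basis i))).tsum_eq,
    fun i => (hasSum_norm_sq (A (basis i))).summable, implies_true, true_and]

theorem isHilbertSchmidt_iff_summable_rows {A : ℓ²(ι, 𝕜) →L[𝕜] ℓ²(ι, 𝕜)} :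
    IsHilbertSchmidt A ↔ Summable fun j => ‖row A j‖ ^ 2 := by
  rw [isHilbertSchmidt_iff_summable_entries, ← (Equiv.prodComm ι ι).summable_iff]
  change Summable (fun ji : ι × ι => ‖row A ji.1 (basis ji.2)‖ ^ 2) ↔ _
  rw [summable_prod_of_nonneg (fun _ => sq_nonneg _)]
  simp only [fun j => (hasSum_norm_sq_apply_basis (row A j)).tsum_eq,
    fun j => (hasSum_norm_sq_apply_basis (row A j)).summable, implies_true, true_and]

theorem isHilbertSchmidt_ofSummableNormSq {φ : ι → ℓ²(ι, 𝕜) →L[𝕜] 𝕜}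
    (hφ : Summable fun k => ‖φ k‖ ^ 2) : IsHilbertSchmidt (ofSummableNormSq φ hφ) :=
  isHilbertSchmidt_iff_summable_rows.2 hφ

theorem isHilbertSchmidt_diagonal {γ : ι → 𝕜} (hγ : Summable fun k => ‖γ k‖ ^ 2) :
    IsHilbertSchmidt (diagonal γ hγ) :=
  isHilbertSchmidt_ofSummableNormSq _

theorem IsHilbertSchmidt.comp_left (L : ℓ²(ι, 𝕜) →L[𝕜] ℓ²(ι, 𝕜))
    {A : ℓ²(ι, 𝕜) →L[𝕜] ℓ²(ι, 𝕜)} (hA : IsHilbertSchmidt A) : IsHilbertSchmidt (L.comp A) := by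
  refine (hA.mul_left (‖L‖ ^ 2)).of_nonneg_of_le (fun _ => by positivity) fun i => ?_
  rw [← mul_pow]
  gcongr
  exact L.le_opNorm _

theorem IsHilbertSchmidt.comp_right {A : ℓ²(ι, 𝕜) →L[𝕜] ℓ²(ι, 𝕜)} (hA : IsHilbertSchmidt A)
    (P : ℓ²(ι, 𝕜) →L[𝕜] ℓ²(ι, 𝕜)) : IsHilbertSchmidt (A.comp P) := by
  rw [isHilbertSchmidt_iff_summable_rows] at hA ⊢
  exact summable_norm_sq_comp hA P

def trace (A : ℓ²(ι, 𝕜) →L[𝕜] ℓ²(ι, 𝕜)) : 𝕜 := ∑' k, A (basis k) k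

theorem trace_comp_comm {A B : ℓ²(ι, 𝕜) →L[𝕜] ℓ²(ι, 𝕜)} (hA : IsHilbertSchmidt A)
    (hB : IsHilbertSchmidt B) : trace (A.comp B) = trace (B.comp A) := by
  set g : ι × ι → 𝕜 := fun kj => B (basis kj.1) kj.2 * A (basis kj.2) kj.1
  have hg : Summable g := by
    have hA' := (isHilbertSchmidt_iff_summable_entries.1 hA).comp_injective
      (Equiv.prodComm ι ι).injective
    refine .of_norm (((isHilbertSchmidt_iff_summable_entries.1 hB).add hA').of_nonneg_of_le
      (fun _ => norm_nonneg _) fun kj => ?_)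
    simp only [g, norm_mul, Function.comp_apply, Equiv.prodComm_apply, Prod.fst_swap,
      Prod.snd_swap]
    nlinarith [sq_nonneg (‖B (basis kj.1) kj.2‖ - ‖A (basis kj.2) kj.1‖)]
  have hrow : ∀ k, HasSum (fun j => g (k, j)) (A (B (basis k)) k) := fun k =>
    hasSum_mul_apply_basis A (B (basis k)) k
  have hcol : ∀ j, HasSum (fun k => g (k, j)) (B (A (basis j)) j) := fun j => by
    simpa only [g, mul_comm] using hasSum_mul_apply_basis B (A (basis j)) j
  calc trace (A.comp B) = ∑' kj, g kj := by
        rw [hg.tsum_prod' fun k => (hrow k).summable]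
        exact tsum_congr fun k => (hrow k).tsum_eq.symm
    _ = ∑' jk, (g ∘ Prod.swap) jk := ((Equiv.prodComm ι ι).tsum_eq g).symm
    _ = trace (B.comp A) := by
        rw [(hg.comp_injective Prod.swap_injective).tsum_prod' fun j => (hcol j).summable]
        exact tsum_congr fun j => (hcol j).tsum_eq

theorem trace_eq_zero_of_comp_self_eq_zero {F D : ℓ²(ι, 𝕜) →L[𝕜] ℓ²(ι, 𝕜)}
    (hF : IsHilbertSchmidt F) (hD : IsHilbertSchmidt D) (hW : (F.comp D).comp (F.comp D) = 0) :
    trace (F.comp D) = 0 := by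
  set W := F.comp D
  set K := LinearMap.ker (W : ℓ²(ι, 𝕜) →ₗ[𝕜] ℓ²(ι, 𝕜))
  have : CompleteSpace K := (ContinuousLinearMap.isClosed_ker W).completeSpace_coe
  set P := K.starProjection
  have hPW : P.comp W = W := by
    ext1 v
    exact K.starProjection_eq_self_iff.2 (LinearMap.mem_ker.2 (by simpa using congr($hW v)))
  have hWP : W.comp P = 0 := by
    ext1 v
    exact K.starProjection_apply_mem v
  calc trace W = trace (P.comp F |>.comp D) := by rw [← hPW]; rfl
    _ = trace (D.comp (P.comp F)) := trace_comp_comm (hF.comp_left P) hD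
    _ = trace (F.comp (D.comp P)) := trace_comp_comm (hD.comp_right P) hF
    _ = trace (W.comp P) := rfl
    _ = 0 := by simp [hWP, trace]

end ell2

end

section WeakSummability

variable {X : Type*} [NormedAddCommGroup X] [NormedSpace ℂ X] {y : ℕ → X}

theorem weaklyQSummable_two_iff :
    WeaklyQSummable 2 y ↔
      ∃ C, ∀ f : X →L[ℂ] ℂ, ‖f‖ ≤ 1 → ∀ F : Finset ℕ, ∑ k ∈ F, ‖f (y k)‖ ^ 2 ≤ C := by
  simp [WeaklyQSummable]

theorem norm_sum_smul_le_of_sum_norm_sq_le {C : ℝ}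
    (hC : ∀ f : X →L[ℂ] ℂ, ‖f‖ ≤ 1 → ∀ F : Finset ℕ, ∑ k ∈ F, ‖f (y k)‖ ^ 2 ≤ C)
    (ξ : ℕ → ℂ) (F : Finset ℕ) : ‖∑ k ∈ F, ξ k • y k‖ ≤ √C * √(∑ k ∈ F, ‖ξ k‖ ^ 2) := by
  obtain ⟨g, hg1, hg⟩ := exists_dual_vector'' ℂ (∑ k ∈ F, ξ k • y k)
  calc ‖∑ k ∈ F, ξ k • y k‖ = ‖g (∑ k ∈ F, ξ k • y k)‖ := by simp [hg]
    _ = ‖∑ k ∈ F, ξ k * g (y k)‖ := by simp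
    _ ≤ ∑ k ∈ F, ‖ξ k‖ * ‖g (y k)‖ := norm_sum_le_of_le _ fun k _ => (norm_mul _ _).le
    _ ≤ √(∑ k ∈ F, ‖ξ k‖ ^ 2) * √(∑ k ∈ F, ‖g (y k)‖ ^ 2) :=
        Real.sum_mul_le_sqrt_mul_sqrt F _ _
    _ ≤ √C * √(∑ k ∈ F, ‖ξ k‖ ^ 2) := by
        rw [mul_comm]
        gcongr
        exact hC g hg1 F

namespace WeaklyQSummable

variable [CompleteSpace X]

theorem summable_smul (hy : WeaklyQSummable 2 y) (ξ : ℓ²(ℕ, ℂ)) :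
    Summable fun k => ξ k • y k := by
  obtain ⟨C, hC⟩ := weaklyQSummable_two_iff.1 hy
  refine summable_iff_vanishing_norm.2 fun ε hε => ?_
  set η := ε / (√C + 1)
  obtain ⟨s, hs⟩ := summable_iff_vanishing_norm.1 (ell2.hasSum_norm_sq ξ).summable (η ^ 2)
    (by positivity)
  refine ⟨s, fun F hF => ?_⟩
  have hξF : √(∑ k ∈ F, ‖ξ k‖ ^ 2) ≤ η :=
    Real.sqrt_le_iff.2 ⟨by positivity, (le_abs_self _).trans (hs F hF).le⟩
  calc ‖∑ k ∈ F, ξ k • y k‖ ≤ √C * √(∑ k ∈ F, ‖ξ k‖ ^ 2) :=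
        norm_sum_smul_le_of_sum_norm_sq_le hC ξ F
    _ ≤ √C * η := by gcongr
    _ < ε := by
        rw [mul_div_assoc', div_lt_iff₀ (by positivity)]
        nlinarith [Real.sqrt_nonneg C]

theorem exists_norm_tsum_smul_le (hy : WeaklyQSummable 2 y) :
    ∃ C, ∀ ξ : ℓ²(ℕ, ℂ), ‖∑' k, ξ k • y k‖ ≤ C * ‖ξ‖ := by
  obtain ⟨C, hC⟩ := weaklyQSummable_two_iff.1 hy
  refine ⟨√C, fun ξ => le_of_tendsto' (hy.summable_smul ξ).hasSum.norm fun F => ?_⟩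
  calc ‖∑ k ∈ F, ξ k • y k‖ ≤ √C * √(∑ k ∈ F, ‖ξ k‖ ^ 2) :=
        norm_sum_smul_le_of_sum_norm_sq_le hC ξ F
    _ ≤ √C * ‖ξ‖ := by
        gcongr
        exact Real.sqrt_le_iff.2 ⟨norm_nonneg _, ell2.sum_norm_sq_le ξ F⟩

noncomputable def synthesis (hy : WeaklyQSummable 2 y) : ℓ²(ℕ, ℂ) →L[ℂ] X :=
  LinearMap.mkContinuousOfExistsBound
    { toFun := fun ξ => ∑' k, ξ k • y k
      map_add' := fun ξ η => by
        simp only [lp.coeFn_add, Pi.add_apply, add_smul]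
        exact (hy.summable_smul ξ).tsum_add (hy.summable_smul η)
      map_smul' := fun c ξ => by
        simp only [lp.coeFn_smul, Pi.smul_apply, smul_eq_mul, mul_smul, RingHom.id_apply]
        exact (hy.summable_smul ξ).tsum_const_smul c }
    hy.exists_norm_tsum_smul_le

theorem synthesis_apply (hy : WeaklyQSummable 2 y) (ξ : ℓ²(ℕ, ℂ)) :
    hy.synthesis ξ = ∑' k, ξ k • y k := rfl

theorem synthesis_basis (hy : WeaklyQSummable 2 y) (k : ℕ) :
    hy.synthesis (ell2.basis k) = y k := by
  rw [synthesis_apply, tsum_eq_single k fun j hj => by simp [ell2.basis_apply, hj]]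
  simp [ell2.basis_apply]

theorem norm_le_norm_synthesis (hy : WeaklyQSummable 2 y) (k : ℕ) : ‖y k‖ ≤ ‖hy.synthesis‖ := by
  simpa [synthesis_basis, ell2.norm_basis] using hy.synthesis.le_opNorm (ell2.basis k)

end WeaklyQSummable

end WeakSummability

theorem summable_mul_smul {E : Type*} [NormedAddCommGroup E] [NormedSpace ℂ E] [CompleteSpace E]
    {a c : ℕ → ℂ} {v : ℕ → E} {C K : ℝ} (ha : Summable fun k => ‖a k‖) (hc : ∀ k, ‖c k‖ ≤ C)
    (hv : ∀ k, ‖v k‖ ≤ K) : Summable fun k => (a k * c k) • v k := by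
  refine .of_norm_bounded (ha.mul_right (C * K)) fun k => ?_
  rw [norm_smul, norm_mul, mul_assoc]
  have hC : 0 ≤ C := (norm_nonneg _).trans (hc k)
  gcongr
  exacts [hc k, hv k]

theorem tsum_mul_bidual_apply_smul_eq_zero {X : Type*} [NormedAddCommGroup X] [NormedSpace ℂ X]
    [CompleteSpace X] {a : ℕ → ℂ} (ha : Summable fun k => ‖a k‖) {φ : ℕ → X →L[ℂ] ℂ} {M : ℝ}
    (hφ : ∀ k, ‖φ k‖ ≤ M) {y : ℕ → X} {K : ℝ} (hy : ∀ k, ‖y k‖ ≤ K)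
    (h0 : ∀ x, ∑' k, (a k * φ k x) • y k = 0) (z : (X →L[ℂ] ℂ) →L[ℂ] ℂ) :
    ∑' k, (a k * z (φ k)) • y k = 0 := by
  have hz : ∀ k, ‖z (φ k)‖ ≤ ‖z‖ * M := fun k =>
    (z.le_opNorm _).trans (by gcongr; exact hφ k)
  -- `f (∑ a_k z(φ_k) y_k) = z (∑ a_k f(y_k) φ_k)`, and the latter sum is `0` by `h0`
  refine SeparatingDual.eq_zero_of_forall_dual_eq_zero (R := ℂ) fun f => ?_
  have hf : ∀ k, ‖f (y k)‖ ≤ ‖f‖ * K := fun k =>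
    (f.le_opNorm _).trans (by gcongr; exact hy k)
  have hψ : ∑' k, (a k * f (y k)) • φ k = 0 := by
    ext x
    have hx : ∀ k, ‖φ k x‖ ≤ M * ‖x‖ := fun k =>
      ((φ k).le_opNorm x).trans (by gcongr; exact hφ k)
    rw [zero_apply, ← ContinuousLinearMap.apply_apply x,
      ContinuousLinearMap.map_tsum _ (summable_mul_smul ha hf hφ), ← map_zero f, ← h0 x,
      f.map_tsum (summable_mul_smul ha hx hy)]
    refine tsum_congr fun k => ?_
    simp only [ContinuousLinearMap.apply_apply, map_smul, smul_eq_mul]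
    ring
  rw [f.map_tsum (summable_mul_smul ha hz hy), ← map_zero z, ← hψ,
    z.map_tsum (summable_mul_smul ha hf hφ)]
  refine tsum_congr fun k => ?_
  simp only [map_smul, smul_eq_mul]
  ring

theorem exists_mul_eq_of_summable_norm {𝕜 ι : Type*} [RCLike 𝕜] {a : ι → 𝕜}
    (ha : Summable fun k => ‖a k‖) :
    ∃ α γ : ι → 𝕜, (∀ k, α k * γ k = a k) ∧ Summable (fun k => ‖α k‖ ^ 2) ∧
      Summable (fun k => ‖γ k‖ ^ 2) := by
  refine ⟨fun k => a k / (√‖a k‖ : ℝ), fun k => (√‖a k‖ : ℝ), fun k => ?_, ?_, ?_⟩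
  · rcases eq_or_ne (a k) 0 with h | h
    · simp [h]
    · exact div_mul_cancel₀ _ (by simpa using h)
  · exact ha.congr fun k => by simp [norm_div, abs_of_nonneg]
  · exact ha.congr fun k => by simp [abs_of_nonneg]

open ell2 in
theorem tsum_mul_apply_eq_zero_of_weaklyQSummable_two {X : Type*} [NormedAddCommGroup X]
    [NormedSpace ℂ X] [CompleteSpace X] {a : ℕ → ℂ} (ha : Summable fun k => ‖a k‖)
    {φ : ℕ → X →L[ℂ] ℂ} {M : ℝ} (hφ : ∀ k, ‖φ k‖ ≤ M) {y : ℕ → X} (hy : WeaklyQSummable 2 y)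
    (h0 : ∀ x, ∑' k, (a k * φ k x) • y k = 0) (U : X →L[ℂ] (X →L[ℂ] ℂ) →L[ℂ] ℂ) :
    ∑' k, a k * U (y k) (φ k) = 0 := by
  -- without these, instance search gives up on the norm of `X***` and of `ℓ² →L[ℂ] X**`
  let _ : NormedAddCommGroup ((X →L[ℂ] ℂ) →L[ℂ] ℂ) := inferInstance
  let _ : NormedSpace ℂ ((X →L[ℂ] ℂ) →L[ℂ] ℂ) := inferInstance
  obtain ⟨α, γ, hαγ, hα, hγ⟩ := exists_mul_eq_of_summable_norm ha
  set B := hy.synthesis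
  set G := U.comp B
  have hψ := summable_norm_sq_apply_smul hα hφ
  set F := ofSummableNormSq _ (summable_norm_sq_comp hψ G)
  set D := diagonal γ hγ
  have hF_apply : ∀ η k, F η k = α k * G η (φ k) := fun η k => by simp [F]
  have hBDF : ∀ η, B (D (F η)) = 0 := fun η => by
    rw [← tsum_mul_bidual_apply_smul_eq_zero ha hφ hy.norm_le_norm_synthesis h0 (G η),
      WeaklyQSummable.synthesis_apply]
    refine tsum_congr fun k => ?_
    rw [diagonal_apply, hF_apply, ← hαγ k]
    congr 1
    ring
  have hW : (F.comp D).comp (F.comp D) = 0 := by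
    ext1 ξ
    have hG : G (D (F (D ξ))) = 0 := by simp [G, hBDF]
    ext k
    simp [hF_apply, hG]
  rw [← trace_eq_zero_of_comp_self_eq_zero (isHilbertSchmidt_ofSummableNormSq _)
    (isHilbertSchmidt_diagonal hγ) hW, trace]
  refine tsum_congr fun k => ?_
  rw [ContinuousLinearMap.comp_apply, hF_apply, diagonal_basis, map_smul,
    ContinuousLinearMap.comp_apply, WeaklyQSummable.synthesis_basis, smul_apply, smul_eq_mul,
    ← hαγ k, mul_assoc]

theorem Real.rpow_mul_sq_le_add {p q t s : ℝ} (hp1 : 1 ≤ p) (hp2 : p ≤ 2) (hq : 0 < q)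
    (hpq : 1 / p + 1 / q = 1) (ht : 0 ≤ t) (hs : 0 ≤ s) :
    t ^ (2 / p - 1) * s ^ 2 ≤ t + s ^ q := by
  have hw₁ : 0 ≤ 2 / p - 1 := by rw [sub_nonneg, le_div_iff₀ (by linarith)]; linarith
  have hw₁' : 2 / p - 1 ≤ 1 := by rw [sub_le_iff_le_add, div_le_iff₀ (by linarith)]; linarith
  have hw : 2 / p - 1 + 2 / q = 1 := by linear_combination 2 * hpq
  have hsq : s ^ 2 = (s ^ q) ^ (2 / q) := by
    rw [← Real.rpow_mul hs, mul_div_cancel₀ _ hq.ne', Real.rpow_two]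
  rw [hsq]
  calc t ^ (2 / p - 1) * (s ^ q) ^ (2 / q) ≤ (2 / p - 1) * t + 2 / q * s ^ q :=
        Real.geom_mean_le_arith_mean2_weighted hw₁ (by positivity) ht (by positivity) hw
    _ ≤ t + s ^ q := by nlinarith [Real.rpow_nonneg hs q]

theorem ENNReal.toReal_pos_and_one_div_add_one_div {p : ℝ} (hp : 0 < p) {q : ℝ≥0∞}
    (hq : q ≠ ⊤) (hpq : 1 / ENNReal.ofReal p + 1 / q = 1) :
    0 < q.toReal ∧ 1 / p + 1 / q.toReal = 1 := by
  have hq0 : q ≠ 0 := by rintro rfl; simp at hpq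
  refine ⟨ENNReal.toReal_pos hq0 hq, ?_⟩
  have := congrArg ENNReal.toReal hpq
  rwa [ENNReal.toReal_add (by simpa using hp) (by simpa using hq0), ENNReal.toReal_div,
    ENNReal.toReal_div, ENNReal.toReal_ofReal hp.le, ENNReal.toReal_one] at this

theorem norm_apply_rpow_smul_sq {X : Type*} [NormedAddCommGroup X] [NormedSpace ℂ X] {t : ℝ}
    (ht : 0 ≤ t) (e : ℝ) (f : X →L[ℂ] ℂ) (v : X) :
    ‖f (((t ^ e : ℝ) : ℂ) • v)‖ ^ 2 = t ^ (2 * e) * ‖f v‖ ^ 2 := by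
  rw [map_smul, norm_smul, mul_pow, Complex.norm_real, Real.norm_of_nonneg (by positivity),
    ← Real.rpow_natCast, ← Real.rpow_mul ht, mul_comm e]
  norm_num

theorem WeaklyQSummable.weaklyQSummable_two_rpow_smul {X : Type*} [NormedAddCommGroup X]
    [NormedSpace ℂ X] {q : ℝ≥0∞} {x : ℕ → X} (hx : WeaklyQSummable q x) {p : ℝ} (hp1 : 1 ≤ p)
    (hp2 : p ≤ 2) (hpq : 1 / ENNReal.ofReal p + 1 / q = 1) {t : ℕ → ℝ} (ht0 : ∀ k, 0 ≤ t k)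
    (ht : Summable t) : WeaklyQSummable 2 fun k => ((t k ^ (1 / p - 1 / 2) : ℝ) : ℂ) • x k := by
  rw [weaklyQSummable_two_iff]
  simp_rw [norm_apply_rpow_smul_sq (ht0 _), show 2 * (1 / p - 1 / 2) = 2 / p - 1 by ring]
  rcases eq_or_ne q ⊤ with rfl | hq
  · obtain ⟨K, hK⟩ := hx.1 rfl
    obtain rfl : p = 1 := by simpa [ENNReal.ofReal_eq_one] using hpq
    refine ⟨(∑' k, t k) * K ^ 2, fun f hf F => ?_⟩
    have hfx : ∀ k, ‖f (x k)‖ ≤ K := fun k =>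
      (f.le_opNorm _).trans (by nlinarith [hK k, norm_nonneg f, norm_nonneg (x k)])
    norm_num only [Real.rpow_one]
    calc ∑ k ∈ F, t k * ‖f (x k)‖ ^ 2 ≤ ∑ k ∈ F, t k * K ^ 2 := by
          gcongr with k
          exacts [ht0 k, hfx k]
      _ ≤ (∑' k, t k) * K ^ 2 := by
          rw [← Finset.sum_mul]
          gcongr
          exact ht.sum_le_tsum F fun k _ => ht0 k
  · obtain ⟨C, hC⟩ := hx.2 hq
    obtain ⟨hq0, hpq⟩ := ENNReal.toReal_pos_and_one_div_add_one_div (by linarith) hq hpq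
    refine ⟨∑' k, t k + C, fun f hf F => ?_⟩
    calc ∑ k ∈ F, t k ^ (2 / p - 1) * ‖f (x k)‖ ^ 2
        ≤ ∑ k ∈ F, (t k + ‖f (x k)‖ ^ q.toReal) := by
          gcongr with k
          exact Real.rpow_mul_sq_le_add hp1 hp2 hq0 hpq (ht0 k) (norm_nonneg _)
      _ ≤ ∑' k, t k + C := by
          rw [Finset.sum_add_distrib]
          exact add_le_add (ht.sum_le_tsum F fun k _ => ht0 k) (hC f hf F)

theorem Complex.norm_div_rpow_eq {r p : ℝ} (hr : 0 < r) (hrp : 1 / r = 1 / 2 + 1 / p) (z : ℂ) :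
    ‖z / ((‖z‖ ^ r) ^ (1 / p - 1 / 2) : ℝ)‖ = ‖z‖ ^ r := by
  rcases eq_or_ne z 0 with rfl | hz
  · simp [Real.zero_rpow hr.ne']
  have hz' : 0 < ‖z‖ := norm_pos_iff.2 hz
  rw [norm_div, Complex.norm_real, Real.norm_of_nonneg (by positivity), ← Real.rpow_mul hz'.le,
    div_eq_iff (by positivity), ← Real.rpow_add hz']
  conv_lhs => rw [← Real.rpow_one ‖z‖]
  congr 1
  field_simp at hrp ⊢
  linarith

theorem ap_r_pdual_general (r p : ℝ) (p' : ℝ≥0∞)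
    (hr0 : 0 < r) (hp1 : 1 ≤ p) (hp2 : p ≤ 2)
    (hrp : 1 / r = 1 / 2 + 1 / p)
    (hp' : 1 / ENNReal.ofReal p + 1 / p' = 1)
    (X : Type*) [NormedAddCommGroup X] [NormedSpace ℂ X] [CompleteSpace X]
    (lam : ℕ → ℂ) (hlam : Summable (fun k => ‖lam k‖ ^ r))
    (x' : ℕ → X →L[ℂ] ℂ) (hx' : ∃ M, ∀ k, ‖x' k‖ ≤ M)
    (x : ℕ → X) (hx : WeaklyQSummable p' x)
    (hzero : ∀ y : X, ∑' k, (lam k * (x' k) y) • x k = 0)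
    (U : X →L[ℂ] ((X →L[ℂ] ℂ) →L[ℂ] ℂ)) :
    ∑' k, lam k * (U (x k)) (x' k) = 0 := by
  obtain ⟨M, hM⟩ := hx'
  set δ : ℕ → ℝ := fun k => (‖lam k‖ ^ r) ^ (1 / p - 1 / 2)
  have hy : WeaklyQSummable 2 fun k => (δ k : ℂ) • x k :=
    hx.weaklyQSummable_two_rpow_smul hp1 hp2 hp' (fun k => by positivity) hlam
  have hlam_eq : ∀ k, lam k / δ k * δ k = lam k := fun k => by
    rcases eq_or_ne (lam k) 0 with h | h
    · simp [h]
    · exact div_mul_cancel₀ _ <| Complex.ofReal_ne_zero.2 <|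
        (Real.rpow_pos_of_pos (Real.rpow_pos_of_pos (norm_pos_iff.2 h) r) _).ne'
  have ha : Summable fun k => ‖lam k / δ k‖ :=
    hlam.congr fun k => (Complex.norm_div_rpow_eq hr0 hrp (lam k)).symm
  have h0 : ∀ y, ∑' k, (lam k / δ k * x' k y) • ((δ k : ℂ) • x k) = 0 := fun y => by
    simp_rw [smul_smul, mul_right_comm _ (x' _ y), hlam_eq]
    exact hzero y
  simpa only [map_smul, smul_apply, smul_eq_mul, ← mul_assoc, hlam_eq] using
    tsum_mul_apply_eq_zero_of_weaklyQSummable_two ha hM hy h0 U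

/-- for `0 < r ≤ 1`, `1 ≤ p ≤ 2` with `1/r = 1/2 + 1/p` and `p'`
conjugate to `p`, every complex Banach space has `AP_{[r,p']}`: any tensor
element `∑ λ_k x'_k ⊗ x_k` (with `∑|λ_k|^r < ∞`, `(x'_k)` bounded, `(x_k)` weakly
`p'`-summable) inducing the zero operator has vanishing generalized trace against
every `U : X → X**`. -/
theorem ap_r_pdual (r p : ℝ) (p' : ℝ≥0∞)
    (hr0 : 0 < r) (hr1 : r ≤ 1) (hp1 : 1 ≤ p) (hp2 : p ≤ 2)
    (hrp : 1 / r = 1 / 2 + 1 / p)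
    (hp' : 1 / ENNReal.ofReal p + 1 / p' = 1)
    (X : Type*) [NormedAddCommGroup X] [NormedSpace ℂ X] [CompleteSpace X]
    (lam : ℕ → ℂ) (hlam : Summable (fun k => ‖lam k‖ ^ r))
    (x' : ℕ → X →L[ℂ] ℂ) (hx' : ∃ M, ∀ k, ‖x' k‖ ≤ M)
    (x : ℕ → X) (hx : WeaklyQSummable p' x)
    (hzero : ∀ y : X, ∑' k, (lam k * (x' k) y) • x k = 0)
    (U : X →L[ℂ] ((X →L[ℂ] ℂ) →L[ℂ] ℂ)) :
    ∑' k, lam k * (U (x k)) (x' k) = 0 :=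
  ap_r_pdual_general r p p' hr0 hp1 hp2 hrp hp' X lam hlam x' hx' x hx hzero U
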